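/- Let q ≥ 2 be an integer and let n be a positive integer with n ≤ q² + 3q − 1. Let T = C_q = {0, ∞} ∪ {k : k ∈ ℤ, 1 ≤ |k| ≤ q} ∪ {1/k : k ∈ ℤ, 1 ≤ |k| ≤ q}. Then any two functions f, g : ℤ² → ℝ that are T-clue-equivalent on I_{n,n} agree at every point of I_{n,n}; equivalently, every solvable n × n RK puzzle with clue slopes T has a unique solution. -/

import Mathlib

open Classical

/-- A slope is an element of `ℚ ∪ {∞}`; `none` denotes `∞`. -/
abbrev Slope := Option ℚ

/-- The clue of `f` along the line of slope `s` (vertical line `x = c` when `s = ∞ = none`,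
and the line `y = r·x + c` when `s = some r`), with respect to the grid
`I_{n,m} = {1,…,n} × {1,…,m} ⊆ ℤ²`: the sum of `f` over the grid points lying on the line. -/
noncomputable def clueSum (n m : ℕ) (s : Slope) (c : ℝ) (f : ℤ × ℤ → ℝ) : ℝ :=
  ∑ p ∈ (Finset.Icc (1 : ℤ) n ×ˢ Finset.Icc (1 : ℤ) m).filter
      (fun p => match s with
        | none => (p.1 : ℝ) = c
        | some r => (p.2 : ℝ) = (r : ℝ) * (p.1 : ℝ) + c),
    f p

/-- `f` and `g` are `T`-clue-equivalent on `I_{n,m}`: for every slope `s ∈ T` and every line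
of slope `s`, the clues of `f` and `g` along that line agree. -/
def ClueEquiv (n m : ℕ) (T : Set Slope) (f g : ℤ × ℤ → ℝ) : Prop :=
  ∀ s ∈ T, ∀ c : ℝ, clueSum n m s c f = clueSum n m s c g

/-- The entry `p ∈ I_{n,m}` is uniquely solvable with respect to the slope set `T`. -/
def UniqSolv (n m : ℕ) (T : Set Slope) (p : ℤ × ℤ) : Prop :=
  ∀ f g : ℤ × ℤ → ℝ, ClueEquiv n m T f g → f p = g p

/-- The slope set `C_q = {0, ∞} ∪ {k : 1 ≤ |k| ≤ q} ∪ {1/k : 1 ≤ |k| ≤ q}`. -/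
def CposQ (q : ℕ) : Set Slope :=
  {some 0, none} ∪
    {s | ∃ k : ℤ, 1 ≤ |k| ∧ |k| ≤ (q : ℤ) ∧ (s = some (k : ℚ) ∨ s = some (1 / (k : ℚ)))}

/-!
Encode `f - g` on the grid as `h = ∑ₚ (f - g)(p) Xᵖ` in the group algebra `ℝ[ℤ²]`. For a
primitive direction `d`, the lines of direction `d` are the fibres of `s ↦ det(s, d)`, so the
clues along them all vanish iff `h` is killed by the induced map `ℝ[ℤ²] → ℝ[ℤ]`, whose kernel is
generated by `X^d - 1`. The slopes of `C_q` give pairwise non-parallel primitive directions, and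
the kernels of the other directions are untouched by dividing out `X^d - 1`, so
`∏_d (X^d - 1)` divides `h`. Order `ℤ²` lexicographically: in a domain the lexicographically
largest (smallest) exponents of two factors add up to one of the product, so the spread between
the largest and the smallest exponent is superadditive. In the first coordinate the product has
spread at least `∑_d |d.1| = q² + 3q - 1 ≥ n`, while a nonzero `h` supported on `{1,…,n}²` has
spread at most `n - 1`; hence `h = 0`.
-/

open AddMonoidAlgebra Finset

namespace AddMonoidAlgebra

section Divisibility

variable {R A : Type*} [CommRing R] [AddCommGroup A]

theorem single_sub_one_dvd_single_zsmul_sub_one (d : A) (j : ℤ) :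
    single d (1 : R) - 1 ∣ single (j • d) 1 - 1 := by
  induction j using Int.induction_on with
  | zero => simp [← one_def]
  | succ j ih =>
    have : single (((j : ℤ) + 1) • d) (1 : R) - 1
        = single ((j : ℤ) • d) 1 * (single d 1 - 1) + (single ((j : ℤ) • d) 1 - 1) := by
      rw [mul_sub, single_mul_single, add_smul, one_smul, mul_one, mul_one]; ring
    rw [this]
    exact dvd_add (dvd_mul_left _ _) ih
  | pred j ih =>
    have : single ((-(j : ℤ) - 1) • d) (1 : R) - 1
        = single (-(j : ℤ) • d) 1 - 1 - single ((-(j : ℤ) - 1) • d) 1 * (single d 1 - 1) := by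
      rw [mul_sub, single_mul_single, sub_smul (-(j : ℤ)), one_smul, sub_add_cancel, mul_one,
        mul_one]
      ring
    rw [this]
    exact dvd_sub ih (dvd_mul_left _ _)

theorem single_sub_one_dvd_of_mapDomain_eq_zero {π : A →+ ℤ} {d w : A} (hw : π w = 1)
    (hker : π.ker ≤ AddSubgroup.zmultiples d) {x : R[A]}
    (hx : mapDomainRingHom R π x = 0) : single d 1 - 1 ∣ x := by
  -- `ρ a = π a • w` retracts onto `ℤ w` and kills `x`, while `a - ρ a ∈ ker π ⊆ ℤ d`.
  set ρ : A →+ A := (zmultiplesHom A w).comp π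
  have hρ : mapDomainRingHom R ρ x = 0 := by
    rw [mapDomainRingHom_comp, RingHom.comp_apply, hx, map_zero]
  suffices ∀ y : R[A], single d 1 - 1 ∣ y - mapDomainRingHom R ρ y by
    simpa [hρ] using this x
  intro y
  induction y using induction_linear with
  | zero => simp
  | add y z hy hz => rw [map_add, add_sub_add_comm]; exact dvd_add hy hz
  | single a r =>
    have hmem : a - ρ a ∈ π.ker := by simp [ρ, hw]
    obtain ⟨j, hj⟩ := AddSubgroup.mem_zmultiples_iff.mp (hker hmem)
    have : single a r - mapDomainRingHom R ρ (single a r)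
        = single (ρ a) r * (single (j • d) 1 - 1) := by
      simp [mul_sub, single_mul_single, hj]
    rw [this]
    exact dvd_mul_of_dvd_right (single_sub_one_dvd_single_zsmul_sub_one d j) _

theorem single_sub_one_ne_zero [Nontrivial R] {M : Type*} [AddMonoid M] {c : M} (hc : c ≠ 0) :
    single c (1 : R) - 1 ≠ 0 := by
  rw [sub_ne_zero, one_def]
  exact fun h => hc (Finsupp.single_left_injective one_ne_zero (congrArg coeff h))

theorem prod_single_sub_one_dvd [IsDomain R] {ι : Type*} (s : Finset ι) (d : ι → A)
    (π : ι → A →+ ℤ) (hw : ∀ i ∈ s, ∃ w, π i w = 1)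
    (hker : ∀ i ∈ s, (π i).ker ≤ AddSubgroup.zmultiples (d i))
    (hpair : ∀ i ∈ s, ∀ j ∈ s, i ≠ j → π j (d i) ≠ 0)
    {x : R[A]} (hx : ∀ i ∈ s, mapDomainRingHom R (π i) x = 0) :
    ∏ i ∈ s, (single (d i) 1 - 1) ∣ x := by
  induction s using Finset.induction_on generalizing x with
  | empty => simp
  | @insert i s hi ih =>
    have hi' := mem_insert_self i s
    obtain ⟨w, hwi⟩ := hw i hi'
    obtain ⟨y, rfl⟩ := single_sub_one_dvd_of_mapDomain_eq_zero hwi (hker i hi') (hx i hi')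
    rw [prod_insert hi]
    refine mul_dvd_mul_left _ (ih (fun j hj => hw j (mem_insert_of_mem hj))
      (fun j hj => hker j (mem_insert_of_mem hj))
      (fun j hj k hk => hpair j (mem_insert_of_mem hj) k (mem_insert_of_mem hk))
      fun j hj => ?_)
    have hij : π j (d i) ≠ 0 := hpair i hi' j (mem_insert_of_mem hj) (by rintro rfl; exact hi hj)
    have hxj := hx j (mem_insert_of_mem hj)
    rw [map_mul] at hxj
    refine (mul_eq_zero.mp hxj).resolve_left ?_
    rw [map_sub, map_one]
    simpa using single_sub_one_ne_zero (R := R) hij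

end Divisibility

theorem add_mem_support_mul {R A : Type*} [Semiring R] [NoZeroDivisors R]
    [Add A] {p q : R[A]} {a b : A} (ha : a ∈ p.coeff.support) (hb : b ∈ q.coeff.support)
    (huniq : UniqueAdd p.coeff.support q.coeff.support a b) : a + b ∈ (p * q).coeff.support := by
  rw [Finsupp.mem_support_iff, coeff_mul_add_of_uniqueAdd huniq]
  exact mul_ne_zero (Finsupp.mem_support_iff.mp ha) (Finsupp.mem_support_iff.mp hb)

section Spread

variable {R A : Type*} [AddCommGroup A] [LinearOrder A]

def spread [Semiring R] (p : R[A]) : A :=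
  if hp : p.coeff.support.Nonempty then p.coeff.support.max' hp - p.coeff.support.min' hp else 0

section Semiring

variable [Semiring R] {p q : R[A]}

theorem exists_spread_eq_sub (hp : p ≠ 0) :
    ∃ a ∈ p.coeff.support, ∃ b ∈ p.coeff.support, spread p = a - b := by
  have hne : p.coeff.support.Nonempty := by simpa using hp
  exact ⟨_, max'_mem _ hne, _, min'_mem _ hne, dif_pos hne⟩

variable [IsOrderedAddMonoid A]

theorem sub_le_spread {a b : A} (ha : a ∈ p.coeff.support) (hb : b ∈ p.coeff.support) :
    a - b ≤ spread p := by
  rw [spread, dif_pos ⟨a, ha⟩]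
  exact sub_le_sub (le_max' _ a ha) (min'_le _ b hb)

theorem spread_nonneg (p : R[A]) : 0 ≤ spread p := by
  by_cases hp : p.coeff.support.Nonempty
  · obtain ⟨a, ha⟩ := hp
    simpa using sub_le_spread ha ha
  · rw [spread, dif_neg hp]

theorem spread_add_spread_le_spread_mul [NoZeroDivisors R] (hp : p ≠ 0) (hq : q ≠ 0) :
    spread p + spread q ≤ spread (p * q) := by
  have hp' : p.coeff.support.Nonempty := by simpa using hp
  have hq' : q.coeff.support.Nonempty := by simpa using hq
  have hmax := add_mem_support_mul (max'_mem _ hp') (max'_mem _ hq') fun _ _ ha hb h =>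
    (add_eq_add_iff_eq_and_eq (le_max' _ _ ha) (le_max' _ _ hb)).mp h
  have hmin := add_mem_support_mul (min'_mem _ hp') (min'_mem _ hq') fun _ _ ha hb h =>
    ((add_eq_add_iff_eq_and_eq (min'_le _ _ ha) (min'_le _ _ hb)).mp h.symm).imp Eq.symm Eq.symm
  rw [spread, spread, dif_pos hp', dif_pos hq']
  calc _ = _ - _ := by abel
    _ ≤ spread (p * q) := sub_le_spread hmax hmin

end Semiring

section CommSemiring

variable [CommSemiring R] [NoZeroDivisors R] [Nontrivial R] [IsOrderedAddMonoid A] {p : R[A]}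

theorem sum_spread_le_spread_prod {ι : Type*} (s : Finset ι) (f : ι → R[A])
    (hf : ∀ i ∈ s, f i ≠ 0) : ∑ i ∈ s, spread (f i) ≤ spread (∏ i ∈ s, f i) := by
  induction s using Finset.induction_on with
  | empty => simpa using spread_nonneg (1 : R[A])
  | @insert i s hi ih =>
    rw [sum_insert hi, prod_insert hi]
    have hs : ∀ j ∈ s, f j ≠ 0 := fun j hj => hf j (mem_insert_of_mem hj)
    calc _ ≤ spread (f i) + spread (∏ j ∈ s, f j) := add_le_add le_rfl (ih hs)
      _ ≤ _ := spread_add_spread_le_spread_mul (hf i (mem_insert_self i s))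
          (prod_ne_zero_iff.mpr hs)

theorem sum_spread_le_spread_of_prod_dvd {ι : Type*} (s : Finset ι) (f : ι → R[A])
    (hf : ∀ i ∈ s, f i ≠ 0) (hp : p ≠ 0) (hdvd : ∏ i ∈ s, f i ∣ p) :
    ∑ i ∈ s, spread (f i) ≤ spread p := by
  obtain ⟨u, rfl⟩ := hdvd
  calc _ ≤ spread (∏ i ∈ s, f i) := sum_spread_le_spread_prod s f hf
    _ ≤ spread (∏ i ∈ s, f i) + spread u := le_add_of_nonneg_right (spread_nonneg u)
    _ ≤ _ := spread_add_spread_le_spread_mul (left_ne_zero_of_mul hp) (right_ne_zero_of_mul hp)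

end CommSemiring

theorem abs_le_spread_single_sub_one [Ring R] [Nontrivial R] [IsOrderedAddMonoid A] (a : A) :
    |a| ≤ spread (single a (1 : R) - 1) := by
  rcases eq_or_ne a 0 with rfl | ha
  · simpa using spread_nonneg (single (0 : A) (1 : R) - 1 : R[A])
  have ha' : a ∈ (single a (1 : R) - 1).coeff.support := by simp [one_def, ha]
  have h0 : (0 : A) ∈ (single a (1 : R) - 1).coeff.support := by simp [one_def, ha.symm]
  have h1 := sub_le_spread ha' h0
  have h2 := sub_le_spread h0 ha'
  rw [sub_zero] at h1
  rw [zero_sub] at h2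
  exact abs_le'.mpr ⟨h1, h2⟩

end Spread

end AddMonoidAlgebra

theorem Prod.Lex.abs_fst_le_fst_abs {α β : Type*} [AddCommGroup α] [LinearOrder α]
    [IsOrderedAddMonoid α] [AddCommGroup β] [LinearOrder β] [IsOrderedAddMonoid β] (x : α ×ₗ β) :
    |(ofLex x).1| ≤ (ofLex |x|).1 :=
  abs_le'.mpr ⟨monotone_fst_ofLex (le_abs_self x), monotone_fst_ofLex (neg_le_abs x)⟩

-- `linePairing d x = det (x, d)`: its fibres are the lines of direction `d`.
def linePairing (d : ℤ × ℤ) : ℤ ×ₗ ℤ →+ ℤ where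
  toFun x := d.2 * (ofLex x).1 - d.1 * (ofLex x).2
  map_zero' := by simp
  map_add' x y := by simp only [ofLex_add, Prod.fst_add, Prod.snd_add]; ring

@[simp]
theorem linePairing_toLex (d p : ℤ × ℤ) : linePairing d (toLex p) = d.2 * p.1 - d.1 * p.2 := rfl

theorem ker_linePairing_le {d : ℤ × ℤ} {w : ℤ ×ₗ ℤ} (hw : linePairing d w = 1) :
    (linePairing d).ker ≤ AddSubgroup.zmultiples (toLex d) := by
  intro x hx
  obtain ⟨w, rfl⟩ := toLex.surjective w
  obtain ⟨s, rfl⟩ := toLex.surjective x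
  rw [AddMonoidHom.mem_ker, linePairing_toLex] at hx
  rw [linePairing_toLex] at hw
  refine AddSubgroup.mem_zmultiples_iff.mpr ⟨-linePairing w (toLex s), ?_⟩
  change toLex (-linePairing w (toLex s) • d) = toLex s
  rw [toLex_inj]
  ext <;> simp only [Prod.smul_fst, Prod.smul_snd, smul_eq_mul, linePairing_toLex]
  · linear_combination s.1 * hw - w.1 * hx
  · linear_combination s.2 * hw - w.2 * hx

-- Primitive directions of the slopes of `C_q`: `(1, k)` has slope `k`, `(k, 1)` slope `1 / k`
-- (`∞` for `k = 0`).
noncomputable def directions (q : ℕ) : Finset (ℤ × ℤ) :=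
  (Icc (-q : ℤ) q).image (fun k => (1, k)) ∪ (Icc (-q : ℤ) q \ {-1, 1}).image (fun k => (k, 1))

theorem mem_directions {q : ℕ} {d : ℤ × ℤ} : d ∈ directions q ↔
    (∃ k : ℤ, |k| ≤ q ∧ d = (1, k)) ∨ (∃ k : ℤ, |k| ≤ q ∧ |k| ≠ 1 ∧ d = (k, 1)) := by
  simp only [directions, mem_union, mem_image, mem_sdiff, mem_Icc, mem_insert, mem_singleton,
    ← abs_le]
  constructor
  · rintro (⟨k, hk, rfl⟩ | ⟨k, ⟨hk, hk1⟩, rfl⟩)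
    · exact Or.inl ⟨k, hk, rfl⟩
    · exact Or.inr ⟨k, hk, by rw [ne_eq, abs_eq zero_le_one]; tauto, rfl⟩
  · rintro (⟨k, hk, rfl⟩ | ⟨k, hk, hk1, rfl⟩)
    · exact Or.inl ⟨k, hk, rfl⟩
    · exact Or.inr ⟨k, ⟨hk, by rw [ne_eq, abs_eq zero_le_one] at hk1; tauto⟩, rfl⟩

theorem exists_linePairing_eq_one {q : ℕ} {d : ℤ × ℤ} (hd : d ∈ directions q) :
    ∃ w, linePairing d w = 1 := by
  rcases mem_directions.mp hd with ⟨k, -, rfl⟩ | ⟨k, -, -, rfl⟩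
  · exact ⟨toLex (0, -1), by simp⟩
  · exact ⟨toLex (1, 0), by simp⟩

theorem linePairing_ne_zero_of_mem_directions {q : ℕ} {d e : ℤ × ℤ} (hd : d ∈ directions q)
    (he : e ∈ directions q) (hde : d ≠ e) : linePairing e (toLex d) ≠ 0 := by
  have abs_eq_one {u v : ℤ} (h : u * v = 1) : |u| = 1 :=
    Int.isUnit_iff_abs_eq.mp (IsUnit.of_mul_eq_one v h)
  rcases mem_directions.mp hd with ⟨j, -, rfl⟩ | ⟨j, -, hj, rfl⟩ <;>
    rcases mem_directions.mp he with ⟨k, -, rfl⟩ | ⟨k, -, hk, rfl⟩ <;>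
    simp only [linePairing_toLex, ne_eq, Prod.mk.injEq, true_and, and_true, mul_one, one_mul]
      at hde ⊢ <;> intro h
  · omega
  · exact hk (abs_eq_one (by linarith : k * j = 1))
  · exact hj (abs_eq_one (by linarith : j * k = 1))
  · omega

theorem sum_abs_Icc_neg_self (q : ℕ) : ∑ k ∈ Icc (-q : ℤ) q, |k| = q * (q + 1) := by
  induction q with
  | zero => simp
  | succ q ih =>
    have hI : Icc (-(q + 1 : ℕ) : ℤ) (q + 1 : ℕ)
        = insert (-(q + 1 : ℤ)) (insert (q + 1 : ℤ) (Icc (-q : ℤ) q)) := by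
      ext k; simp only [mem_Icc, mem_insert]; omega
    rw [hI, sum_insert (by simp; omega), sum_insert (by simp), ih, abs_neg,
      abs_of_nonneg (by positivity)]
    push_cast
    ring

theorem sum_abs_fst_directions {q : ℕ} (hq : 1 ≤ q) :
    ∑ d ∈ directions q, |d.1| = q ^ 2 + 3 * q - 1 := by
  have hdisj : Disjoint ((Icc (-q : ℤ) q).image (fun k => ((1 : ℤ), k)))
      ((Icc (-q : ℤ) q \ {-1, 1}).image (fun k => (k, (1 : ℤ)))) := by
    simp only [disjoint_left, mem_image, mem_sdiff, mem_insert, mem_singleton]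
    rintro _ ⟨j, -, rfl⟩ ⟨k, ⟨-, hk⟩, h⟩
    simp_all
  have hsub : ({-1, 1} : Finset ℤ) ⊆ Icc (-q : ℤ) q := by
    intro k; simp only [mem_insert, mem_singleton, mem_Icc]; omega
  have hsplit := sum_sdiff hsub (f := fun k : ℤ => |k|)
  rw [directions, sum_union hdisj, sum_image (by simp), sum_image (by simp)]
  simp only [abs_one, sum_const, Int.card_Icc, nsmul_eq_mul, mul_one]
  rw [sum_abs_Icc_neg_self, sum_pair (by norm_num)] at hsplit
  simp only [abs_neg, abs_one] at hsplit
  have : ((q : ℤ) + 1 - -q).toNat = 2 * q + 1 := by omega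
  rw [this]
  push_cast
  linarith

noncomputable def grid (n m : ℕ) : Finset (ℤ × ℤ) := Icc 1 (n : ℤ) ×ˢ Icc 1 (m : ℤ)

theorem clueSum_none (n m : ℕ) (c : ℝ) (f : ℤ × ℤ → ℝ) :
    clueSum n m none c f = ∑ p ∈ (grid n m).filter (fun p => (p.1 : ℝ) = c), f p := rfl

theorem clueSum_some (n m : ℕ) (r : ℚ) (c : ℝ) (f : ℤ × ℤ → ℝ) :
    clueSum n m (some r) c f
      = ∑ p ∈ (grid n m).filter (fun p => (p.2 : ℝ) = r * p.1 + c), f p := rfl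

theorem exists_clueSum_eq_sum_linePairing {q : ℕ} {d : ℤ × ℤ} (hd : d ∈ directions q) (t : ℤ) :
    ∃ s ∈ CposQ q, ∃ c : ℝ, ∀ (n m : ℕ) (f : ℤ × ℤ → ℝ),
      clueSum n m s c f = ∑ p ∈ (grid n m).filter (fun p => linePairing d (toLex p) = t), f p := by
  rcases mem_directions.mp hd with ⟨k, hk, rfl⟩ | ⟨k, hk, hk1, rfl⟩
  · refine ⟨some k, ?_, -t, fun n m f => ?_⟩
    · rcases eq_or_ne k 0 with rfl | hk0
      · simp [CposQ]
      · exact Or.inr ⟨k, Int.one_le_abs hk0, hk, Or.inl rfl⟩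
    · rw [clueSum_some]
      refine sum_congr (filter_congr fun p _ => ?_) fun _ _ => rfl
      rw [linePairing_toLex, ← @Int.cast_inj ℝ]
      push_cast
      constructor <;> intro h <;> linarith
  · rcases eq_or_ne k 0 with rfl | hk0
    · refine ⟨none, by simp [CposQ], t, fun n m f => ?_⟩
      rw [clueSum_none]
      refine sum_congr (filter_congr fun p _ => ?_) fun _ _ => rfl
      rw [linePairing_toLex, ← @Int.cast_inj ℝ]
      push_cast
      constructor <;> intro h <;> linarith
    · refine ⟨some (1 / k), Or.inr ⟨k, Int.one_le_abs hk0, hk, Or.inr rfl⟩, -t / k, fun n m f => ?_⟩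
      rw [clueSum_some]
      refine sum_congr (filter_congr fun p _ => ?_) fun _ _ => rfl
      rw [linePairing_toLex, ← @Int.cast_inj ℝ]
      have hk0' : (k : ℝ) ≠ 0 := Int.cast_ne_zero.mpr hk0
      push_cast
      field_simp
      constructor <;> intro h <;> linarith

noncomputable def gridPoly (n m : ℕ) (f : ℤ × ℤ → ℝ) : ℝ[ℤ ×ₗ ℤ] :=
  ∑ p ∈ grid n m, single (toLex p) (f p)

theorem coeff_gridPoly_toLex (n m : ℕ) (f : ℤ × ℤ → ℝ) (p : ℤ × ℤ) :
    (gridPoly n m f).coeff (toLex p) = if p ∈ grid n m then f p else 0 := by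
  simp [gridPoly, coeff_sum, Finsupp.finsetSum_apply, Finsupp.single_apply]

theorem ofLex_mem_grid_of_mem_support {n m : ℕ} {f : ℤ × ℤ → ℝ} {a : ℤ ×ₗ ℤ}
    (ha : a ∈ (gridPoly n m f).coeff.support) : ofLex a ∈ grid n m := by
  obtain ⟨p, rfl⟩ := toLex.surjective a
  by_contra h
  exact Finsupp.mem_support_iff.mp ha (by rw [coeff_gridPoly_toLex, if_neg (by simpa using h)])

theorem coeff_mapDomain_gridPoly (n m : ℕ) (f : ℤ × ℤ → ℝ) (π : ℤ ×ₗ ℤ →+ ℤ) (t : ℤ) :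
    (mapDomainRingHom ℝ π (gridPoly n m f)).coeff t
      = ∑ p ∈ (grid n m).filter (fun p => π (toLex p) = t), f p := by
  rw [gridPoly, map_sum, coeff_sum, Finsupp.finsetSum_apply, sum_filter]
  refine sum_congr rfl fun p _ => ?_
  change (mapDomain π (single (toLex p) (f p))).coeff t = _
  rw [mapDomain_single, coeff_single, Finsupp.single_apply]

theorem mapDomain_gridPoly_sub_eq_zero {q n m : ℕ} {f g : ℤ × ℤ → ℝ}
    (hfg : ClueEquiv n m (CposQ q) f g) {d : ℤ × ℤ} (hd : d ∈ directions q) :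
    mapDomainRingHom ℝ (linePairing d) (gridPoly n m (f - g)) = 0 := by
  ext t
  obtain ⟨s, hs, c, hc⟩ := exists_clueSum_eq_sum_linePairing hd t
  have := hfg s hs c
  rw [hc, hc] at this
  rw [coeff_mapDomain_gridPoly]
  simpa [sum_sub_distrib] using sub_eq_zero.mpr this

theorem eq_zero_of_prod_dvd_of_le_sum_abs_fst {R : Type*} [CommRing R] [IsDomain R] {n m : ℕ}
    (s : Finset (ℤ × ℤ)) (hs : (n : ℤ) ≤ ∑ d ∈ s, |d.1|) {x : R[ℤ ×ₗ ℤ]}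
    (hsupp : ∀ a ∈ x.coeff.support, ofLex a ∈ grid n m)
    (hdvd : ∏ d ∈ s, (single (toLex d) 1 - 1) ∣ x) : x = 0 := by
  by_contra hx
  have hf : ∀ d ∈ s, single (toLex d) (1 : R) - 1 ≠ 0 := fun d hd h0 =>
    hx (zero_dvd_iff.mp (prod_eq_zero (f := fun d => single (toLex d) (1 : R) - 1) hd h0 ▸ hdvd))
  obtain ⟨a, ha, b, hb, hab⟩ := exists_spread_eq_sub hx
  have hspread := sum_spread_le_spread_of_prod_dvd s _ hf hx hdvd
  have hwidth : ∑ d ∈ s, |d.1| ≤ (ofLex a).1 - (ofLex b).1 := calc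
    ∑ d ∈ s, |d.1| ≤ ∑ d ∈ s, (ofLex (spread (single (toLex d) (1 : R) - 1))).1 := by
      refine sum_le_sum fun d _ => (Prod.Lex.abs_fst_le_fst_abs (toLex d)).trans ?_
      exact Prod.Lex.monotone_fst_ofLex (abs_le_spread_single_sub_one _)
    _ = (ofLex (∑ d ∈ s, spread (single (toLex d) (1 : R) - 1))).1 := (Prod.fst_sum ..).symm
    _ ≤ (ofLex (spread x)).1 := Prod.Lex.monotone_fst_ofLex hspread
    _ = (ofLex a).1 - (ofLex b).1 := by rw [hab]; rfl
  have ha' := hsupp a ha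
  have hb' := hsupp b hb
  simp only [grid, mem_product, mem_Icc] at ha' hb'
  omega

theorem rk_unique_CposQ_general (q : ℕ) (hq : 2 ≤ q) (n : ℕ)
    (hnq : n ≤ q ^ 2 + 3 * q - 1) :
    ∀ f g : ℤ × ℤ → ℝ, ClueEquiv n n (CposQ q) f g →
      ∀ p : ℤ × ℤ, 1 ≤ p.1 → p.1 ≤ (n : ℤ) → 1 ≤ p.2 → p.2 ≤ (n : ℤ) → f p = g p := by
  intro f g hfg p hp1 hp2 hp3 hp4
  have hwidth : (n : ℤ) ≤ ∑ d ∈ directions q, |d.1| := by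
    have : 1 ≤ q ^ 2 + 3 * q := by nlinarith
    rw [sum_abs_fst_directions (by omega)]
    zify [this] at hnq
    exact hnq
  have hdvd : ∏ d ∈ directions q, (single (toLex d) 1 - 1) ∣ gridPoly n n (f - g) :=
    prod_single_sub_one_dvd _ toLex linePairing (fun _ hd => exists_linePairing_eq_one hd)
      (fun _ hd => (exists_linePairing_eq_one hd).elim fun _ hw => ker_linePairing_le hw)
      (fun _ hd _ he hde => linePairing_ne_zero_of_mem_directions hd he hde)
      (fun _ hd => mapDomain_gridPoly_sub_eq_zero hfg hd)
  have hzero := eq_zero_of_prod_dvd_of_le_sum_abs_fst _ hwidth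
    (fun _ ha => ofLex_mem_grid_of_mem_support ha) hdvd
  have hp : p ∈ grid n n := by simp [grid, *]
  have := coeff_gridPoly_toLex n n (f - g) p
  rw [hzero, if_pos hp] at this
  simpa [sub_eq_zero, eq_comm] using this

/-- if `q ≥ 2` and `n ≤ q² + 3q − 1`, then every entry of `I_{n,n}` is
uniquely solvable with respect to `C_q`; equivalently every solvable `n × n` RK puzzle
with clue slopes `C_q` has a unique solution. -/
theorem rk_unique_CposQ (q : ℕ) (hq : 2 ≤ q) (n : ℕ) (hn : 0 < n)
    (hnq : n ≤ q ^ 2 + 3 * q - 1) :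
    ∀ f g : ℤ × ℤ → ℝ, ClueEquiv n n (CposQ q) f g →
      ∀ p : ℤ × ℤ, 1 ≤ p.1 → p.1 ≤ (n : ℤ) → 1 ≤ p.2 → p.2 ≤ (n : ℤ) → f p = g p :=
  rk_unique_CposQ_general q hq n hnq
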